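/- Let $c_0, c_1 > 0$ and let $q : [0,1] \to \mathbb{R}$ be measurable with $c_0 \le q(x) \le c_1$ on $[0,1]$. For each $k > 0$ let $u(\cdot,k)$ be the continuous solution of $u(x,k) = 1 + k^2 \int_0^x (x-s) q(s) u(s,k)\,ds$. Then for any fixed $0 \le y < x \le 1$, $\lim_{k \to \infty} \frac{u(y,k)}{u(x,k)} = 0$. -/

import Mathlib

/-!
For `q ≥ 0` the solution is positive (at a first zero the right-hand side would
be at least `1`) and nondecreasing, since `u b - u a` dominates `k² ∫_a^b (b - s) q u ≥ 0`.
Monotonicity then bounds the same integral over `[y, x]` from below by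
`c0 u(y) (x - y)² / 2`, so `u(y) / u(x) ≤ 2 / (c0 (x - y)² k²)`.
-/

open MeasureTheory intervalIntegral Filter Set

def IsVolterraSolution (q : ℝ → ℝ) (k : ℝ) (f : ℝ → ℝ) : Prop :=
  ContinuousOn f (Icc 0 1) ∧
    ∀ x ∈ Icc (0 : ℝ) 1, f x = 1 + k ^ 2 * ∫ s in (0 : ℝ)..x, (x - s) * q s * f s

namespace IsVolterraSolution

variable {q f : ℝ → ℝ} {k : ℝ}

theorem intervalIntegrable_kernel (hf : IsVolterraSolution q k f)
    (hq : IntervalIntegrable q volume 0 1) {a b : ℝ} (ha : 0 ≤ a) (hab : a ≤ b) (hb : b ≤ 1)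
    (c : ℝ) : IntervalIntegrable (fun s => (c - s) * q s * f s) volume a b := by
  have hsub : uIcc a b ⊆ Icc 0 1 := by
    rw [uIcc_of_le hab]
    exact Icc_subset_Icc ha hb
  exact ((hq.mono_set (by rwa [uIcc_of_le zero_le_one])).continuousOn_mul
    (by fun_prop)).mul_continuousOn (hf.1.mono hsub)

theorem pos (hf : IsVolterraSolution q k f) (hq : ∀ s ∈ Icc (0 : ℝ) 1, 0 ≤ q s) :
    ∀ x ∈ Icc (0 : ℝ) 1, 0 < f x := by
  by_contra! ⟨t, ht, hft⟩
  set A := Icc (0 : ℝ) 1 ∩ f ⁻¹' Iic 0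
  have hA : IsCompact A :=
    isCompact_Icc.of_isClosed_subset
      (hf.1.preimage_isClosed_of_isClosed isClosed_Icc isClosed_Iic) inter_subset_left
  have ht₀ : sInf A ∈ A := hA.sInf_mem ⟨t, ht, hft⟩
  set t₀ := sInf A
  have hpos_before : ∀ s ∈ Ico 0 t₀, 0 < f s := fun s hs => by
    by_contra! h
    exact hs.2.not_ge (csInf_le hA.bddBelow ⟨⟨hs.1, hs.2.le.trans ht₀.1.2⟩, h⟩)
  have hint : 0 ≤ ∫ s in (0 : ℝ)..t₀, (t₀ - s) * q s * f s := by
    refine integral_nonneg ht₀.1.1 fun s hs => ?_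
    rcases hs.2.eq_or_lt with rfl | hlt
    · simp
    · exact mul_nonneg (mul_nonneg (by linarith) (hq s ⟨hs.1, hs.2.trans ht₀.1.2⟩))
        (hpos_before s ⟨hs.1, hlt⟩).le
  have hft₀ : f t₀ ≤ 0 := ht₀.2
  nlinarith [hf.2 t₀ ht₀.1, sq_nonneg k]

theorem add_integral_le (hf : IsVolterraSolution q k f) (hq : ∀ s ∈ Icc (0 : ℝ) 1, 0 ≤ q s)
    (hq_int : IntervalIntegrable q volume 0 1) {a b : ℝ} (ha : 0 ≤ a) (hab : a ≤ b)
    (hb : b ≤ 1) : f a + k ^ 2 * ∫ s in a..b, (b - s) * q s * f s ≤ f b := by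
  have hsplit := integral_add_adjacent_intervals
    (hf.intervalIntegrable_kernel hq_int le_rfl ha (hab.trans hb) b)
    (hf.intervalIntegrable_kernel hq_int ha hab hb b)
  have hmono :
      ∫ s in (0 : ℝ)..a, (a - s) * q s * f s ≤ ∫ s in (0 : ℝ)..a, (b - s) * q s * f s :=
    integral_mono_on ha (hf.intervalIntegrable_kernel hq_int le_rfl ha (hab.trans hb) a)
      (hf.intervalIntegrable_kernel hq_int le_rfl ha (hab.trans hb) b) fun s hs => by
        have hs' : s ∈ Icc (0 : ℝ) 1 := ⟨hs.1, hs.2.trans (hab.trans hb)⟩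
        nlinarith [mul_nonneg (hq s hs') (hf.pos hq s hs').le]
  rw [hf.2 a ⟨ha, hab.trans hb⟩, hf.2 b ⟨ha.trans hab, hb⟩, ← hsplit, mul_add]
  linarith [mul_le_mul_of_nonneg_left hmono (sq_nonneg k)]

theorem monotoneOn (hf : IsVolterraSolution q k f) (hq : ∀ s ∈ Icc (0 : ℝ) 1, 0 ≤ q s)
    (hq_int : IntervalIntegrable q volume 0 1) : MonotoneOn f (Icc 0 1) := by
  intro a ha b hb hab
  have hint : 0 ≤ ∫ s in a..b, (b - s) * q s * f s :=
    integral_nonneg hab fun s hs =>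
      have hs' : s ∈ Icc (0 : ℝ) 1 := ⟨ha.1.trans hs.1, hs.2.trans hb.2⟩
      mul_nonneg (mul_nonneg (sub_nonneg.2 hs.2) (hq s hs')) (hf.pos hq s hs').le
  linarith [hf.add_integral_le hq hq_int ha.1 hab hb.2, mul_nonneg (sq_nonneg k) hint]

theorem mul_apply_le_apply (hf : IsVolterraSolution q k f)
    (hq : ∀ s ∈ Icc (0 : ℝ) 1, 0 ≤ q s)
    (hq_int : IntervalIntegrable q volume 0 1) {c0 y x : ℝ} (hc0 : ∀ s ∈ Icc y x, c0 ≤ q s)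
    (hy : 0 ≤ y) (hyx : y ≤ x) (hx : x ≤ 1) :
    k ^ 2 * c0 * ((x - y) ^ 2 / 2) * f y ≤ f x := by
  have hyI : y ∈ Icc (0 : ℝ) 1 := ⟨hy, hyx.trans hx⟩
  have hlin : ∫ s in y..x, (x - s) * c0 * f y ≤ ∫ s in y..x, (x - s) * q s * f s := by
    refine integral_mono_on hyx (Continuous.intervalIntegrable (by fun_prop) _ _)
      (hf.intervalIntegrable_kernel hq_int hy hyx hx x) fun s hs => ?_
    have hs' : s ∈ Icc (0 : ℝ) 1 := ⟨hy.trans hs.1, hs.2.trans hx⟩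
    have hcf : c0 * f y ≤ q s * f s :=
      mul_le_mul (hc0 s hs) (hf.monotoneOn hq hq_int hyI hs' hs.1) (hf.pos hq y hyI).le (hq s hs')
    nlinarith [sub_nonneg.2 hs.2]
  have hlin_eq : ∫ s in y..x, (x - s) * c0 * f y = c0 * f y * ((x - y) ^ 2 / 2) := by
    simp only [intervalIntegral.integral_mul_const,
      integral_sub intervalIntegrable_const intervalIntegrable_id, intervalIntegral.integral_const,
      integral_id, smul_eq_mul]
    ring
  nlinarith [hf.add_integral_le hq hq_int hy hyx hx, hf.pos hq y hyI,
    mul_le_mul_of_nonneg_left hlin (sq_nonneg k)]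

theorem apply_div_apply_le (hf : IsVolterraSolution q k f)
    (hq : ∀ s ∈ Icc (0 : ℝ) 1, 0 ≤ q s)
    (hq_int : IntervalIntegrable q volume 0 1) {c0 y x : ℝ} (hc0 : 0 < c0)
    (hc0q : ∀ s ∈ Icc y x, c0 ≤ q s) (hk : k ≠ 0) (hy : 0 ≤ y) (hyx : y < x)
    (hx : x ≤ 1) :
    f y / f x ≤ 2 / (c0 * (x - y) ^ 2) / k ^ 2 := by
  have hfy := hf.pos hq y ⟨hy, hyx.le.trans hx⟩
  have hxy : 0 < x - y := sub_pos.2 hyx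
  calc f y / f x ≤ f y / (k ^ 2 * c0 * ((x - y) ^ 2 / 2) * f y) :=
        div_le_div_of_nonneg_left hfy.le (by positivity)
          (hf.mul_apply_le_apply hq hq_int hc0q hy hyx.le hx)
    _ = 2 / (c0 * (x - y) ^ 2) / k ^ 2 := by field_simp

end IsVolterraSolution

theorem volterra_solution_ratio_tendsto_zero_general
    (c0 c1 : ℝ) (hc0 : 0 < c0)
    (q : ℝ → ℝ) (hq_meas : Measurable q)
    (hq_bnd : ∀ x ∈ Set.Icc (0:ℝ) 1, c0 ≤ q x ∧ q x ≤ c1)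
    (u : ℝ → ℝ → ℝ)
    (hu_cont : ∀ k > 0, ContinuousOn (u k) (Set.Icc (0:ℝ) 1))
    (hu : ∀ k > 0, ∀ x ∈ Set.Icc (0:ℝ) 1,
      u k x = 1 + k ^ 2 * ∫ s in (0:ℝ)..x, (x - s) * q s * u k s)
    (y x : ℝ) (hy : 0 ≤ y) (hyx : y < x) (hx : x ≤ 1) :
    Tendsto (fun k : ℝ => u k y / u k x) atTop (nhds 0) := by
  have hq : ∀ s ∈ Icc (0 : ℝ) 1, 0 ≤ q s := fun s hs => hc0.le.trans (hq_bnd s hs).1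
  have hq_int : IntervalIntegrable q volume 0 1 := by
    rw [intervalIntegrable_iff_integrableOn_Ioc_of_le zero_le_one]
    refine Measure.integrableOn_of_bounded (by simp) hq_meas.aestronglyMeasurable (M := c1)
      (ae_restrict_of_forall_mem measurableSet_Ioc fun s hs => ?_)
    obtain ⟨hlow, hup⟩ := hq_bnd s (Ioc_subset_Icc_self hs)
    exact abs_le.2 ⟨by linarith, hup⟩
  have hsol : ∀ k > 0, IsVolterraSolution q k (u k) := fun k hk => ⟨hu_cont k hk, hu k hk⟩
  have hc0q : ∀ s ∈ Icc y x, c0 ≤ q s := fun s hs =>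
    (hq_bnd s ⟨hy.trans hs.1, hs.2.trans hx⟩).1
  refine squeeze_zero' ?_ ?_ ((tendsto_const_nhds (x := 2 / (c0 * (x - y) ^ 2))).div_atTop
    (tendsto_pow_atTop two_ne_zero))
  · filter_upwards [eventually_gt_atTop 0] with k hk
    exact div_nonneg ((hsol k hk).pos hq y ⟨hy, hyx.le.trans hx⟩).le
      ((hsol k hk).pos hq x ⟨hy.trans hyx.le, hx⟩).le
  · filter_upwards [eventually_gt_atTop 0] with k hk
    exact (hsol k hk).apply_div_apply_le hq hq_int hc0 hc0q hk.ne' hy hyx hx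

/-- For fixed `0 ≤ y < x ≤ 1`, the Volterra solutions satisfy
`u(y,k)/u(x,k) → 0` as `k → ∞`. -/
theorem volterra_solution_ratio_tendsto_zero
    (c0 c1 : ℝ) (hc0 : 0 < c0) (hc1 : 0 < c1)
    (q : ℝ → ℝ) (hq_meas : Measurable q)
    (hq_bnd : ∀ x ∈ Set.Icc (0:ℝ) 1, c0 ≤ q x ∧ q x ≤ c1)
    (u : ℝ → ℝ → ℝ)
    (hu_cont : ∀ k > 0, ContinuousOn (u k) (Set.Icc (0:ℝ) 1))
    (hu : ∀ k > 0, ∀ x ∈ Set.Icc (0:ℝ) 1,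
      u k x = 1 + k ^ 2 * ∫ s in (0:ℝ)..x, (x - s) * q s * u k s)
    (y x : ℝ) (hy : 0 ≤ y) (hyx : y < x) (hx : x ≤ 1) :
    Tendsto (fun k : ℝ => u k y / u k x) atTop (nhds 0) :=
  volterra_solution_ratio_tendsto_zero_general c0 c1 hc0 q hq_meas hq_bnd u hu_cont hu y x hy hyx hx
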